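/- Contrapositive of PPT criterion: if the partial transpose of a bipartite positive semidefinite operator R has a negative eigenvalue, then R is not separable (i.e., R is entangled). -/

import Mathlib

open Matrix Kronecker BigOperators
open scoped ComplexOrder

/-- A bipartite matrix is separable if it is a finite sum of tensor products of
positive semidefinite matrices. -/
def Separable {α β : Type*} [Fintype α] [Fintype β]
    (M : Matrix (α × β) (α × β) ℂ) : Prop :=
  ∃ (k : ℕ) (A : Fin k → Matrix α α ℂ) (B : Fin k → Matrix β β ℂ),
    (∀ i, (A i).PosSemidef) ∧ (∀ i, (B i).PosSemidef) ∧ M = ∑ i, (A i) ⊗ₖ (B i)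

/-- Partial transpose of the second tensor factor (in the computational basis). -/
def ptranspose {α β : Type*} (M : Matrix (α × β) (α × β) ℂ) :
    Matrix (α × β) (α × β) ℂ :=
  Matrix.of fun p q => M (p.1, q.2) (q.1, p.2)

/- The partial transpose maps `A ⊗ B` to `A ⊗ Bᵀ`, which is again positive semidefinite, so it maps
separable matrices to positive semidefinite ones; and a positive semidefinite matrix has no negative
eigenvalue, since `⟪v, M v⟫ = c ‖v‖²` for an eigenvector `v`. -/

theorem Matrix.PosSemidef.nonneg_of_mulVec_eq_smul {n 𝕜 : Type*} [Fintype n] [RCLike 𝕜]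
    {M : Matrix n n 𝕜} (hM : M.PosSemidef) {c : ℝ} {v : n → 𝕜} (hv : v ≠ 0)
    (hcv : M *ᵥ v = (c : 𝕜) • v) : 0 ≤ c := by
  have hquad : 0 ≤ c • (star v ⬝ᵥ v) := by
    simpa [hcv, dotProduct_smul] using hM.dotProduct_mulVec_nonneg v
  obtain ⟨s, hs, hsv⟩ := RCLike.pos_iff_exists_ofReal.mp (dotProduct_star_self_pos_iff.mpr hv)
  rw [← hsv, RCLike.real_smul_eq_coe_mul, ← RCLike.ofReal_mul, RCLike.ofReal_nonneg] at hquad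
  exact nonneg_of_mul_nonneg_left hquad hs

theorem ptranspose_kronecker {α β : Type*} (A : Matrix α α ℂ) (B : Matrix β β ℂ) :
    ptranspose (A ⊗ₖ B) = A ⊗ₖ Bᵀ := by
  ext ⟨a, b⟩ ⟨c, d⟩
  simp [ptranspose]

theorem ptranspose_sum {α β ι : Type*} (s : Finset ι) (M : ι → Matrix (α × β) (α × β) ℂ) :
    ptranspose (∑ i ∈ s, M i) = ∑ i ∈ s, ptranspose (M i) := by
  ext p q
  simp [ptranspose, Matrix.sum_apply]

theorem Separable.posSemidef_ptranspose {α β : Type*} [Fintype α] [Fintype β]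
    {M : Matrix (α × β) (α × β) ℂ} (hM : Separable M) : (ptranspose M).PosSemidef := by
  obtain ⟨k, A, B, hA, hB, rfl⟩ := hM
  rw [ptranspose_sum]
  refine posSemidef_sum _ fun i _ => ?_
  rw [ptranspose_kronecker]
  exact (hA i).kronecker (hB i).transpose

theorem negative_eigenvalue_ptranspose_implies_entangled_general {d₁ d₂ : ℕ}
    (R : Matrix (Fin d₁ × Fin d₂) (Fin d₁ × Fin d₂) ℂ)
    (hneg : ∃ (c : ℝ) (v : Fin d₁ × Fin d₂ → ℂ), c < 0 ∧ v ≠ 0 ∧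
      (ptranspose R).mulVec v = (c : ℂ) • v) :
    ¬ Separable R := by
  intro hsep
  obtain ⟨c, v, hc, hv, hcv⟩ := hneg
  exact hc.not_ge (hsep.posSemidef_ptranspose.nonneg_of_mulVec_eq_smul hv hcv)

/-- contrapositive of the PPT criterion: if the partial transpose of a
bipartite positive semidefinite operator has a negative eigenvalue, then the operator
is not separable, i.e. it is entangled. -/
theorem negative_eigenvalue_ptranspose_implies_entangled {d₁ d₂ : ℕ}
    (R : Matrix (Fin d₁ × Fin d₂) (Fin d₁ × Fin d₂) ℂ) (hR : R.PosSemidef)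
    (hneg : ∃ (c : ℝ) (v : Fin d₁ × Fin d₂ → ℂ), c < 0 ∧ v ≠ 0 ∧
      (ptranspose R).mulVec v = (c : ℂ) • v) :
    ¬ Separable R :=
  negative_eigenvalue_ptranspose_implies_entangled_general R hneg
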